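/- Let H, K be Hopf algebras with bijective antipodes and C a (K,H)-bi-Galois co-object, with Morita maps ∧ : C̄ ⊗_K C → H, ∨ : C ⊗_H C̄ → K, and coalgebra map σ̄ : C → C̄ defined by σ̄(c) = S_H⁻¹(u_{(1)} ∧ c) ▶ u_{(2)} for a fixed u ∈ C with ε(u) = 1. Then σ̄(c_{(2)}) ∧ c_{(1)} = ε(c)1_H for all c ∈ C. -/

import Mathlib

open TensorProduct Coalgebra

variable {k : Type} [CommRing k]

/-- The canonical coalgebra map `σ̄ : C → C̄`, `σ̄(c) = S_H⁻¹(u₍₁₎ ∧ c) ▶ u₍₂₎`, where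
`u₍₁₎ ⊗ u₍₂₎ = w = ∨⁻¹(1)` and `h ▶ x = x ◁ S_H⁻¹(h)` is the left `H`-action on the
co-opposite `C̄`. -/
noncomputable def sigmaBar {H C : Type} [AddCommGroup H] [Module k H]
    [AddCommGroup C] [Module k C]
    (actR : C ⊗[k] H →ₗ[k] C) (wedge : C ⊗[k] C →ₗ[k] H) (Sinv : H →ₗ[k] H)
    (w : C ⊗[k] C) : C →ₗ[k] C :=
  (actR ∘ₗ (LinearMap.lTensor C (Sinv ∘ₗ Sinv ∘ₗ wedge)) ∘ₗ
      (TensorProduct.assoc k C C C).toLinearMap ∘ₗ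
      (LinearMap.rTensor C (TensorProduct.comm k C C).toLinearMap)) ∘ₗ
    ((TensorProduct.mk k (C ⊗[k] C) C) w)


/-! ### Auxiliary facts about Hopf algebras: the antipode is a unital anti-homomorphism. -/

section HopfAux

variable {A : Type} [Ring A] [HopfAlgebra k A]

lemma myAntipode_one : HopfAlgebra.antipode (R := k) (A := A) 1 = 1 := by
  have h := HopfAlgebra.mul_antipode_rTensor_comul_apply (R := k) (A := A) 1
  simpa [Algebra.TensorProduct.one_def] using h

lemma sum_counit_right_smul_left {a : A} {ι : Type*} (r : Coalgebra.Repr k a ι) :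
    ∑ i ∈ r.index, Coalgebra.counit (R := k) (r.right i) • r.left i = a := by
  calc ∑ i ∈ r.index, Coalgebra.counit (R := k) (r.right i) • r.left i
      = TensorProduct.rid k A (∑ i ∈ r.index, r.left i ⊗ₜ[k] Coalgebra.counit (R := k) (r.right i)) := by
        simp only [map_sum, TensorProduct.rid_tmul]
    _ = TensorProduct.rid k A (a ⊗ₜ[k] 1) := by rw [Coalgebra.sum_tmul_counit_eq]
    _ = a := by simp

lemma sum_counit_left_smul_right {a : A} {ι : Type*} (r : Coalgebra.Repr k a ι) :
    ∑ i ∈ r.index, Coalgebra.counit (R := k) (r.left i) • r.right i = a := by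
  calc ∑ i ∈ r.index, Coalgebra.counit (R := k) (r.left i) • r.right i
      = TensorProduct.lid k A (∑ i ∈ r.index, Coalgebra.counit (R := k) (r.left i) ⊗ₜ[k] r.right i) := by
        simp only [map_sum, TensorProduct.lid_tmul]
    _ = TensorProduct.lid k A ((1 : k) ⊗ₜ[k] a) := by rw [Coalgebra.sum_counit_tmul_eq]
    _ = a := by simp

/-- A representation of `comul (a*b)` from representations of `comul a` and `comul b`. -/
def mulRepr {a b : A} {ι κ : Type*} (ra : Coalgebra.Repr k a ι) (rb : Coalgebra.Repr k b κ) :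
    Coalgebra.Repr k (a * b) (ι × κ) where
  index := ra.index ×ˢ rb.index
  left p := ra.left p.1 * rb.left p.2
  right p := ra.right p.1 * rb.right p.2
  eq := by
    rw [Bialgebra.comul_mul, ← ra.eq, ← rb.eq, Finset.sum_mul_sum, Finset.sum_product]
    simp [Algebra.TensorProduct.tmul_mul_tmul]

lemma sum_antipode_mul_mul {ι κ : Type*} (a b : A) (ra : Coalgebra.Repr k a ι) (rb : Coalgebra.Repr k b κ) :
    ∑ i ∈ ra.index, ∑ j ∈ rb.index,
      HopfAlgebra.antipode (R := k) (ra.left i * rb.left j) * (ra.right i * rb.right j)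
      = algebraMap k A (Coalgebra.counit (R := k) (a * b)) := by
  have h := HopfAlgebra.sum_antipode_mul_eq_algebraMap_counit (R := k) (mulRepr ra rb)
  simp only [mulRepr, Finset.sum_product] at h
  exact h

lemma claimA {ι κ : Type*} {ιA : ι → Type*} {ιB : κ → Type*}
    (a b : A) (ra : Coalgebra.Repr k a ι) (rb : Coalgebra.Repr k b κ)
    (rA : (i : ι) → Coalgebra.Repr k (ra.right i) (ιA i))
    (rB : (j : κ) → Coalgebra.Repr k (rb.right j) (ιB j)) :
    ∑ i ∈ ra.index, ∑ p ∈ (rA i).index, ∑ j ∈ rb.index, ∑ q ∈ (rB j).index,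
      HopfAlgebra.antipode (R := k) (ra.left i * rb.left j) *
        (((rA i).left p * (rB j).left q) *
          (HopfAlgebra.antipode (R := k) ((rB j).right q) *
            HopfAlgebra.antipode (R := k) ((rA i).right p)))
      = HopfAlgebra.antipode (R := k) (a * b) := by
  have goal1 : ∀ (i : ι) (p : ιA i) (j : κ),
      ∑ q ∈ (rB j).index,
        HopfAlgebra.antipode (R := k) (ra.left i * rb.left j) *
          (((rA i).left p * (rB j).left q) *
            (HopfAlgebra.antipode (R := k) ((rB j).right q) *
              HopfAlgebra.antipode (R := k) ((rA i).right p)))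
      = Coalgebra.counit (R := k) (rb.right j) •
          (HopfAlgebra.antipode (R := k) (ra.left i * rb.left j) *
            ((rA i).left p * HopfAlgebra.antipode (R := k) ((rA i).right p))) := by
    intro i p j
    rw [← Finset.mul_sum]
    rw [Finset.sum_congr rfl (fun q _ =>
      show ((rA i).left p * (rB j).left q) *
            (HopfAlgebra.antipode (R := k) ((rB j).right q) *
              HopfAlgebra.antipode (R := k) ((rA i).right p))
          = ((rA i).left p * ((rB j).left q * HopfAlgebra.antipode (R := k) ((rB j).right q))) *
              HopfAlgebra.antipode (R := k) ((rA i).right p) by simp only [mul_assoc])]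
    rw [← Finset.sum_mul, ← Finset.mul_sum, HopfAlgebra.sum_mul_antipode_eq_algebraMap_counit (rB j),
      ← Algebra.commutes, ← Algebra.smul_def, smul_mul_assoc, mul_smul_comm]
  have goal2 : ∀ (i : ι) (p : ιA i),
      ∑ j ∈ rb.index, Coalgebra.counit (R := k) (rb.right j) •
          (HopfAlgebra.antipode (R := k) (ra.left i * rb.left j) *
            ((rA i).left p * HopfAlgebra.antipode (R := k) ((rA i).right p)))
      = HopfAlgebra.antipode (R := k) (ra.left i * b) *
          ((rA i).left p * HopfAlgebra.antipode (R := k) ((rA i).right p)) := by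
    intro i p
    simp only [← smul_mul_assoc]
    rw [← Finset.sum_mul]
    congr 1
    calc ∑ j ∈ rb.index, Coalgebra.counit (R := k) (rb.right j) •
            HopfAlgebra.antipode (R := k) (ra.left i * rb.left j)
        = HopfAlgebra.antipode (R := k) (∑ j ∈ rb.index,
            ra.left i * (Coalgebra.counit (R := k) (rb.right j) • rb.left j)) := by
          simp only [map_sum, map_smul, mul_smul_comm]
      _ = HopfAlgebra.antipode (R := k) (ra.left i * b) := by
          rw [← Finset.mul_sum, sum_counit_right_smul_left rb]
  have goal3 : ∀ i : ι,
      ∑ p ∈ (rA i).index, HopfAlgebra.antipode (R := k) (ra.left i * b) *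
          ((rA i).left p * HopfAlgebra.antipode (R := k) ((rA i).right p))
      = Coalgebra.counit (R := k) (ra.right i) • HopfAlgebra.antipode (R := k) (ra.left i * b) := by
    intro i
    rw [← Finset.mul_sum, HopfAlgebra.sum_mul_antipode_eq_algebraMap_counit (rA i),
      ← Algebra.commutes, ← Algebra.smul_def]
  calc ∑ i ∈ ra.index, ∑ p ∈ (rA i).index, ∑ j ∈ rb.index, ∑ q ∈ (rB j).index,
        HopfAlgebra.antipode (R := k) (ra.left i * rb.left j) *
          (((rA i).left p * (rB j).left q) *
            (HopfAlgebra.antipode (R := k) ((rB j).right q) *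
              HopfAlgebra.antipode (R := k) ((rA i).right p)))
      = ∑ i ∈ ra.index, Coalgebra.counit (R := k) (ra.right i) •
          HopfAlgebra.antipode (R := k) (ra.left i * b) := by
        refine Finset.sum_congr rfl fun i _ => ?_
        rw [Finset.sum_congr rfl (fun p _ => Finset.sum_congr rfl (fun j _ => goal1 i p j))]
        rw [Finset.sum_congr rfl (fun p _ => goal2 i p)]
        exact goal3 i
    _ = HopfAlgebra.antipode (R := k) (a * b) := by
        calc ∑ i ∈ ra.index, Coalgebra.counit (R := k) (ra.right i) •
                HopfAlgebra.antipode (R := k) (ra.left i * b)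
            = HopfAlgebra.antipode (R := k) (∑ i ∈ ra.index,
                (Coalgebra.counit (R := k) (ra.right i) • ra.left i) * b) := by
              simp only [map_sum, map_smul, smul_mul_assoc]
          _ = HopfAlgebra.antipode (R := k) (a * b) := by
              rw [← Finset.sum_mul, sum_counit_right_smul_left ra]

lemma claimB {ι κ : Type*} {ιA : ι → Type*} {ιB : κ → Type*}
    (a b : A) (ra : Coalgebra.Repr k a ι) (rb : Coalgebra.Repr k b κ)
    (rA : (i : ι) → Coalgebra.Repr k (ra.left i) (ιA i))
    (rB : (j : κ) → Coalgebra.Repr k (rb.left j) (ιB j)) :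
    ∑ i ∈ ra.index, ∑ p ∈ (rA i).index, ∑ j ∈ rb.index, ∑ q ∈ (rB j).index,
      HopfAlgebra.antipode (R := k) ((rA i).left p * (rB j).left q) *
        (((rA i).right p * (rB j).right q) *
          (HopfAlgebra.antipode (R := k) (rb.right j) *
            HopfAlgebra.antipode (R := k) (ra.right i)))
      = HopfAlgebra.antipode (R := k) b * HopfAlgebra.antipode (R := k) a := by
  have goal1 : ∀ (i : ι) (j : κ),
      ∑ p ∈ (rA i).index, ∑ q ∈ (rB j).index,
        HopfAlgebra.antipode (R := k) ((rA i).left p * (rB j).left q) *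
          (((rA i).right p * (rB j).right q) *
            (HopfAlgebra.antipode (R := k) (rb.right j) *
              HopfAlgebra.antipode (R := k) (ra.right i)))
      = (Coalgebra.counit (R := k) (rb.left j) • HopfAlgebra.antipode (R := k) (rb.right j)) *
          (Coalgebra.counit (R := k) (ra.left i) • HopfAlgebra.antipode (R := k) (ra.right i)) := by
    intro i j
    rw [Finset.sum_congr rfl (fun p _ => Finset.sum_congr rfl (fun q _ =>
      show HopfAlgebra.antipode (R := k) ((rA i).left p * (rB j).left q) *
            (((rA i).right p * (rB j).right q) *
              (HopfAlgebra.antipode (R := k) (rb.right j) *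
                HopfAlgebra.antipode (R := k) (ra.right i)))
          = (HopfAlgebra.antipode (R := k) ((rA i).left p * (rB j).left q) *
              ((rA i).right p * (rB j).right q)) *
              (HopfAlgebra.antipode (R := k) (rb.right j) *
                HopfAlgebra.antipode (R := k) (ra.right i)) by simp only [mul_assoc]))]
    rw [Finset.sum_congr rfl (fun p _ => (Finset.sum_mul _ _ _).symm), ← Finset.sum_mul]
    rw [sum_antipode_mul_mul (ra.left i) (rb.left j) (rA i) (rB j)]
    rw [← Algebra.smul_def, Bialgebra.counit_mul, mul_smul, smul_mul_assoc, mul_smul_comm,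
      smul_comm]
  calc ∑ i ∈ ra.index, ∑ p ∈ (rA i).index, ∑ j ∈ rb.index, ∑ q ∈ (rB j).index,
        HopfAlgebra.antipode (R := k) ((rA i).left p * (rB j).left q) *
          (((rA i).right p * (rB j).right q) *
            (HopfAlgebra.antipode (R := k) (rb.right j) *
              HopfAlgebra.antipode (R := k) (ra.right i)))
      = ∑ i ∈ ra.index,
          (∑ j ∈ rb.index, Coalgebra.counit (R := k) (rb.left j) •
            HopfAlgebra.antipode (R := k) (rb.right j)) *
          (Coalgebra.counit (R := k) (ra.left i) • HopfAlgebra.antipode (R := k) (ra.right i)) := by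
        refine Finset.sum_congr rfl fun i _ => ?_
        rw [Finset.sum_comm]
        rw [Finset.sum_congr rfl (fun j _ => goal1 i j)]
        rw [Finset.sum_mul]
    _ = HopfAlgebra.antipode (R := k) b * HopfAlgebra.antipode (R := k) a := by
        rw [← Finset.mul_sum]
        congr 1
        · calc ∑ j ∈ rb.index, Coalgebra.counit (R := k) (rb.left j) •
                HopfAlgebra.antipode (R := k) (rb.right j)
              = HopfAlgebra.antipode (R := k) (∑ j ∈ rb.index,
                  Coalgebra.counit (R := k) (rb.left j) • rb.right j) := by
                simp only [map_sum, map_smul]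
            _ = HopfAlgebra.antipode (R := k) b := by rw [sum_counit_left_smul_right rb]
        · calc ∑ i ∈ ra.index, Coalgebra.counit (R := k) (ra.left i) •
                HopfAlgebra.antipode (R := k) (ra.right i)
              = HopfAlgebra.antipode (R := k) (∑ i ∈ ra.index,
                  Coalgebra.counit (R := k) (ra.left i) • ra.right i) := by
                simp only [map_sum, map_smul]
            _ = HopfAlgebra.antipode (R := k) a := by rw [sum_counit_left_smul_right ra]

end HopfAux

section SixMap

/-- The 6-linear map `(a₁⊗(a₂⊗a₃))⊗(b₁⊗(b₂⊗b₃)) ↦ S(a₁b₁) * ((a₂b₂) * (S b₃ * S a₃))`. -/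
noncomputable def sixMap (k A : Type) [CommRing k] [Ring A] [HopfAlgebra k A] :
    ((A ⊗[k] (A ⊗[k] A)) ⊗[k] (A ⊗[k] (A ⊗[k] A))) →ₗ[k] A :=
  LinearMap.mul' k A ∘ₗ LinearMap.lTensor A (LinearMap.mul' k A) ∘ₗ
    TensorProduct.map (HopfAlgebra.antipode (R := k) ∘ₗ LinearMap.mul' k A)
      (TensorProduct.map (LinearMap.mul' k A)
        (LinearMap.mul' k A ∘ₗ
          TensorProduct.map (HopfAlgebra.antipode (R := k)) (HopfAlgebra.antipode (R := k)) ∘ₗ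
          (TensorProduct.comm k A A).toLinearMap)) ∘ₗ
    LinearMap.lTensor (A ⊗[k] A) (TensorProduct.tensorTensorTensorComm k A A A A).toLinearMap ∘ₗ
    (TensorProduct.tensorTensorTensorComm k A (A ⊗[k] A) A (A ⊗[k] A)).toLinearMap

variable {A : Type} [Ring A] [HopfAlgebra k A]

lemma sixMap_tmul (a1 a2 a3 b1 b2 b3 : A) :
    sixMap k A ((a1 ⊗ₜ (a2 ⊗ₜ a3)) ⊗ₜ (b1 ⊗ₜ (b2 ⊗ₜ b3)))
      = HopfAlgebra.antipode (R := k) (a1 * b1) *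
          ((a2 * b2) * (HopfAlgebra.antipode (R := k) b3 * HopfAlgebra.antipode (R := k) a3)) := by
  simp [sixMap, TensorProduct.tensorTensorTensorComm_tmul]

lemma sum_swap_blocks {M : Type*} [AddCommMonoid M] {i1 i3 : Type*} {i2 : i1 → Type*}
    {i4 : i3 → Type*} (s : Finset i1) (t : Finset i3) (S1 : (i : i1) → Finset (i2 i))
    (S2 : (j : i3) → Finset (i4 j)) (f : (i : i1) → i2 i → (j : i3) → i4 j → M) :
    ∑ j ∈ t, ∑ q ∈ S2 j, ∑ i ∈ s, ∑ p ∈ S1 i, f i p j q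
      = ∑ i ∈ s, ∑ p ∈ S1 i, ∑ j ∈ t, ∑ q ∈ S2 j, f i p j q := by
  calc ∑ j ∈ t, ∑ q ∈ S2 j, ∑ i ∈ s, ∑ p ∈ S1 i, f i p j q
      = ∑ j ∈ t, ∑ i ∈ s, ∑ q ∈ S2 j, ∑ p ∈ S1 i, f i p j q :=
        Finset.sum_congr rfl fun j _ => Finset.sum_comm
    _ = ∑ i ∈ s, ∑ j ∈ t, ∑ q ∈ S2 j, ∑ p ∈ S1 i, f i p j q := Finset.sum_comm
    _ = ∑ i ∈ s, ∑ p ∈ S1 i, ∑ j ∈ t, ∑ q ∈ S2 j, f i p j q := by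
      refine Finset.sum_congr rfl fun i _ => ?_
      calc ∑ j ∈ t, ∑ q ∈ S2 j, ∑ p ∈ S1 i, f i p j q
          = ∑ j ∈ t, ∑ p ∈ S1 i, ∑ q ∈ S2 j, f i p j q :=
            Finset.sum_congr rfl fun j _ => Finset.sum_comm
        _ = ∑ p ∈ S1 i, ∑ j ∈ t, ∑ q ∈ S2 j, f i p j q := Finset.sum_comm

lemma myAntipode_mul_aux {ι κ : Type*} {ιAl ιAr : ι → Type*} {ιBl ιBr : κ → Type*}
    (a b : A) (ra : Coalgebra.Repr k a ι) (rb : Coalgebra.Repr k b κ)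
    (rAl : (i : ι) → Coalgebra.Repr k (ra.left i) (ιAl i))
    (rAr : (i : ι) → Coalgebra.Repr k (ra.right i) (ιAr i))
    (rBl : (j : κ) → Coalgebra.Repr k (rb.left j) (ιBl j))
    (rBr : (j : κ) → Coalgebra.Repr k (rb.right j) (ιBr j)) :
    HopfAlgebra.antipode (R := k) (a * b)
      = HopfAlgebra.antipode (R := k) b * HopfAlgebra.antipode (R := k) a := by
  have hta := Coalgebra.sum_tmul_tmul_eq (R := k) ra rAl rAr
  have htb := Coalgebra.sum_tmul_tmul_eq (R := k) rb rBl rBr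
  have eAr : sixMap k A
      ((∑ i ∈ ra.index, ∑ p ∈ (rAr i).index, ra.left i ⊗ₜ[k] ((rAr i).left p ⊗ₜ[k] (rAr i).right p)) ⊗ₜ[k]
       (∑ j ∈ rb.index, ∑ q ∈ (rBr j).index, rb.left j ⊗ₜ[k] ((rBr j).left q ⊗ₜ[k] (rBr j).right q)))
      = ∑ i ∈ ra.index, ∑ p ∈ (rAr i).index, ∑ j ∈ rb.index, ∑ q ∈ (rBr j).index,
          HopfAlgebra.antipode (R := k) (ra.left i * rb.left j) *
            (((rAr i).left p * (rBr j).left q) *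
              (HopfAlgebra.antipode (R := k) ((rBr j).right q) *
                HopfAlgebra.antipode (R := k) ((rAr i).right p))) := by
    simp only [TensorProduct.sum_tmul, TensorProduct.tmul_sum, map_sum, sixMap_tmul]
    exact sum_swap_blocks _ _ _ _ _
  have eAl : sixMap k A
      ((∑ i ∈ ra.index, ∑ p ∈ (rAl i).index, (rAl i).left p ⊗ₜ[k] ((rAl i).right p ⊗ₜ[k] ra.right i)) ⊗ₜ[k]
       (∑ j ∈ rb.index, ∑ q ∈ (rBl j).index, (rBl j).left q ⊗ₜ[k] ((rBl j).right q ⊗ₜ[k] rb.right j)))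
      = ∑ i ∈ ra.index, ∑ p ∈ (rAl i).index, ∑ j ∈ rb.index, ∑ q ∈ (rBl j).index,
          HopfAlgebra.antipode (R := k) ((rAl i).left p * (rBl j).left q) *
            (((rAl i).right p * (rBl j).right q) *
              (HopfAlgebra.antipode (R := k) (rb.right j) *
                HopfAlgebra.antipode (R := k) (ra.right i))) := by
    simp only [TensorProduct.sum_tmul, TensorProduct.tmul_sum, map_sum, sixMap_tmul]
    exact sum_swap_blocks _ _ _ _ _
  calc HopfAlgebra.antipode (R := k) (a * b)
      = sixMap k A
        ((∑ i ∈ ra.index, ∑ p ∈ (rAr i).index, ra.left i ⊗ₜ[k] ((rAr i).left p ⊗ₜ[k] (rAr i).right p)) ⊗ₜ[k]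
         (∑ j ∈ rb.index, ∑ q ∈ (rBr j).index, rb.left j ⊗ₜ[k] ((rBr j).left q ⊗ₜ[k] (rBr j).right q))) := by
        rw [eAr]; exact (claimA a b ra rb rAr rBr).symm
    _ = sixMap k A
        ((∑ i ∈ ra.index, ∑ p ∈ (rAl i).index, (rAl i).left p ⊗ₜ[k] ((rAl i).right p ⊗ₜ[k] ra.right i)) ⊗ₜ[k]
         (∑ j ∈ rb.index, ∑ q ∈ (rBl j).index, (rBl j).left q ⊗ₜ[k] ((rBl j).right q ⊗ₜ[k] rb.right j))) := by
        rw [← hta, ← htb]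
    _ = HopfAlgebra.antipode (R := k) b * HopfAlgebra.antipode (R := k) a := by
        rw [eAl]; exact claimB a b ra rb rAl rBl

/-- The antipode of a Hopf algebra is anti-multiplicative. -/
lemma myAntipode_mul (a b : A) :
    HopfAlgebra.antipode (R := k) (a * b)
      = HopfAlgebra.antipode (R := k) b * HopfAlgebra.antipode (R := k) a :=
  myAntipode_mul_aux a b (ℛ k a) (ℛ k b) (fun _ => ℛ k _) (fun _ => ℛ k _)
    (fun _ => ℛ k _) (fun _ => ℛ k _)

end SixMap

/-- Let `H, K` be Hopf algebras with bijective antipodes and `C` a `(K,H)`-bi-Galois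
co-object, with Morita maps `∧ = wedge : C̄ ⊗_K C → H` and `∨ = vee : C ⊗_H C̄ → K`
(given at the level of `k`-modules together with their defining identities), and
let `w = u₍₁₎ ⊗ u₍₂₎ = ∨⁻¹(1_K)`, which is grouplike in `C ⊗_H C̄`.  Then the
coalgebra map `σ̄(c) = S_H⁻¹(u₍₁₎ ∧ c) ▶ u₍₂₎` satisfies
`σ̄(c₍₂₎) ∧ c₍₁₎ = ε(c) 1_H` for all `c ∈ C`. -/
theorem sigmaBar_antipode_identity
    {H : Type} [Ring H] [HopfAlgebra k H]
    {K : Type} [Ring K] [HopfAlgebra k K]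
    {C : Type} [AddCommGroup C] [Module k C] [Coalgebra k C]
    (actL : K ⊗[k] C →ₗ[k] C) (actR : C ⊗[k] H →ₗ[k] C)
    (SinvH : H →ₗ[k] H) (SinvK : K →ₗ[k] K)
    (hSH1 : SinvH ∘ₗ HopfAlgebra.antipode (R := k) (A := H) = LinearMap.id)
    (hSH2 : HopfAlgebra.antipode (R := k) (A := H) ∘ₗ SinvH = LinearMap.id)
    (hSK1 : SinvK ∘ₗ HopfAlgebra.antipode (R := k) (A := K) = LinearMap.id)
    (hSK2 : HopfAlgebra.antipode (R := k) (A := K) ∘ₗ SinvK = LinearMap.id)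
    -- `C` is a `(K,H)`-bimodule (coalgebra)
    (hactLone : ∀ c : C, actL (1 ⊗ₜ c) = c)
    (hactLmul : ∀ (x y : K) (c : C), actL ((x * y) ⊗ₜ c) = actL (x ⊗ₜ actL (y ⊗ₜ c)))
    (hactRone : ∀ c : C, actR (c ⊗ₜ 1) = c)
    (hactRmul : ∀ (c : C) (g h : H), actR (c ⊗ₜ (g * h)) = actR (actR (c ⊗ₜ g) ⊗ₜ h))
    (hbimod : ∀ (x : K) (c : C) (h : H), actL (x ⊗ₜ actR (c ⊗ₜ h)) = actR (actL (x ⊗ₜ c) ⊗ₜ h))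
    -- the Morita maps and their identities
    (wedge : C ⊗[k] C →ₗ[k] H) (vee : C ⊗[k] C →ₗ[k] K)
    (hwedge_counit : wedge ∘ₗ comul (R := k) (A := C)
        = (Algebra.linearMap k H) ∘ₗ counit (R := k) (A := C))
    (hvee_counit : vee ∘ₗ comul (R := k) (A := C)
        = (Algebra.linearMap k K) ∘ₗ counit (R := k) (A := C))
    (hwedgevee : ∀ c d e : C, actR (c ⊗ₜ wedge (d ⊗ₜ e)) = actL (vee (c ⊗ₜ d) ⊗ₜ e))
    (hwedgeHright : ∀ (c d : C) (h : H), wedge (c ⊗ₜ actR (d ⊗ₜ h)) = wedge (c ⊗ₜ d) * h)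
    (hwedgeHleft : ∀ (h : H) (c d : C), wedge (actR (c ⊗ₜ SinvH h) ⊗ₜ d) = h * wedge (c ⊗ₜ d))
    (hwedgeKbal : ∀ (x : K) (c d : C),
        wedge (actL (SinvK x ⊗ₜ c) ⊗ₜ d) = wedge (c ⊗ₜ actL (x ⊗ₜ d)))
    -- `w = ∨⁻¹(1_K)` and its grouplike property in `C ⊗_H C̄`
    (w : C ⊗[k] C)
    (hvee_w : vee w = 1)
    (hεw : (TensorProduct.lid k k)
        ((TensorProduct.map (counit (R := k) (A := C)) (counit (R := k) (A := C))) w) = 1)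
    (Q : Submodule k (C ⊗[k] C))
    (hQ : Q = Submodule.span k {x | ∃ (c : C) (h : H) (d : C),
        x = actR (c ⊗ₜ h) ⊗ₜ d - c ⊗ₜ actR (d ⊗ₜ SinvH h)})
    (hgrouplike :
      (TensorProduct.map Q.mkQ Q.mkQ)
        ((TensorProduct.tensorTensorTensorComm k C C C C).toLinearMap
          ((LinearMap.lTensor (C ⊗[k] C) (TensorProduct.comm k C C).toLinearMap)
            ((TensorProduct.map (comul (R := k) (A := C)) (comul (R := k) (A := C))) w)))
      = (TensorProduct.map Q.mkQ Q.mkQ) (w ⊗ₜ w)) :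
    wedge ∘ₗ (TensorProduct.map (sigmaBar actR wedge SinvH w) LinearMap.id) ∘ₗ
        (TensorProduct.comm k C C).toLinearMap ∘ₗ comul (R := k) (A := C)
      = (Algebra.linearMap k H) ∘ₗ counit (R := k) (A := C) := by
  have hSH1' : ∀ h : H, SinvH (HopfAlgebra.antipode (R := k) h) = h := fun h => by
    simpa using LinearMap.congr_fun hSH1 h
  have hSH2' : ∀ h : H, HopfAlgebra.antipode (R := k) (SinvH h) = h := fun h => by
    simpa using LinearMap.congr_fun hSH2 h
  have hSK1' : ∀ x : K, SinvK (HopfAlgebra.antipode (R := k) x) = x := fun x => by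
    simpa using LinearMap.congr_fun hSK1 x
  -- Key identity: the antipode of `wedge (σ̄ c₍₂₎ ⊗ c₍₁₎)`-type expressions.
  have key : ∀ z : C ⊗[k] C,
      HopfAlgebra.antipode (R := k)
        (wedge ((TensorProduct.map (sigmaBar actR wedge SinvH w) LinearMap.id)
          ((TensorProduct.comm k C C) z)))
      = wedge ((LinearMap.lTensor C
          (actL ∘ₗ (TensorProduct.mk k K C (HopfAlgebra.antipode (R := k) (vee w))))) z) := by
    intro z
    induction z using TensorProduct.induction_on with
    | zero => simp
    | add z₁ z₂ h₁ h₂ => simp only [map_add, h₁, h₂]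
    | tmul x y =>
      have sub : ∀ w' : C ⊗[k] C,
          HopfAlgebra.antipode (R := k)
            (wedge ((sigmaBar actR wedge SinvH w') y ⊗ₜ[k] x))
          = wedge (x ⊗ₜ[k] actL (HopfAlgebra.antipode (R := k) (vee w') ⊗ₜ[k] y)) := by
        intro w'
        induction w' using TensorProduct.induction_on with
        | zero => simp [sigmaBar]
        | add w₁ w₂ g₁ g₂ =>
          have hσ : (sigmaBar actR wedge SinvH (w₁ + w₂)) y
              = (sigmaBar actR wedge SinvH w₁) y + (sigmaBar actR wedge SinvH w₂) y := by
            simp [sigmaBar, add_tmul]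
          rw [hσ, add_tmul, map_add, map_add, g₁, g₂]
          simp [map_add, add_tmul, tmul_add]
        | tmul p q =>
          have hσ : (sigmaBar actR wedge SinvH (p ⊗ₜ[k] q)) y
              = actR (q ⊗ₜ[k] SinvH (SinvH (wedge (p ⊗ₜ[k] y)))) := by
            simp [sigmaBar]
          rw [hσ, hwedgeHleft (SinvH (wedge (p ⊗ₜ[k] y))) q x, myAntipode_mul,
            hSH2' (wedge (p ⊗ₜ[k] y))]
          have h3 := hwedgeHleft (HopfAlgebra.antipode (R := k) (wedge (q ⊗ₜ[k] x))) p y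
          rw [← h3, hSH1' (wedge (q ⊗ₜ[k] x)), hwedgevee p q x]
          have h5 := hwedgeKbal (HopfAlgebra.antipode (R := k) (vee (p ⊗ₜ[k] q))) x y
          rw [hSK1'] at h5
          exact h5
      have e1 : (TensorProduct.comm k C C) (x ⊗ₜ[k] y) = y ⊗ₜ[k] x := rfl
      rw [e1]
      have e2 : (TensorProduct.map (sigmaBar actR wedge SinvH w) LinearMap.id) (y ⊗ₜ[k] x)
          = (sigmaBar actR wedge SinvH w) y ⊗ₜ[k] x := by simp
      rw [e2]
      have e3 : (LinearMap.lTensor C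
          (actL ∘ₗ (TensorProduct.mk k K C (HopfAlgebra.antipode (R := k) (vee w)))))
          (x ⊗ₜ[k] y)
          = x ⊗ₜ[k] actL (HopfAlgebra.antipode (R := k) (vee w) ⊗ₜ[k] y) := by simp
      rw [e3]
      exact sub w
  -- Conclude.
  apply LinearMap.ext
  intro c
  have hkey := key (comul (R := k) (A := C) c)
  rw [hvee_w, myAntipode_one] at hkey
  have hg : (actL ∘ₗ (TensorProduct.mk k K C (1 : K))) = LinearMap.id :=
    LinearMap.ext fun y => by simpa using hactLone y
  rw [hg, LinearMap.lTensor_id, LinearMap.id_apply] at hkey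
  have hwc := LinearMap.congr_fun hwedge_counit c
  simp only [LinearMap.comp_apply] at hwc
  rw [hwc] at hkey
  have hfin : wedge ((TensorProduct.map (sigmaBar actR wedge SinvH w) LinearMap.id)
      ((TensorProduct.comm k C C) (comul (R := k) (A := C) c)))
      = (Algebra.linearMap k H) (counit (R := k) (A := C) c) := by
    have h6 := congrArg SinvH hkey
    rw [hSH1'] at h6
    rw [h6]
    have h1 : SinvH (1 : H) = 1 := by
      have h7 := hSH1' 1
      rwa [myAntipode_one] at h7
    rw [Algebra.linearMap_apply, Algebra.algebraMap_eq_smul_one, map_smul, h1]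
  simpa only [LinearMap.comp_apply, LinearEquiv.coe_coe] using hfin
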